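/- arXiv:1912.08637 — 5 statements merged into one kernel-verified Lean document; each statement's English description precedes it below -/
import Mathlib

section
/- Let X ∈ ℝ^{n×p}, let S' ⊆ S ⊆ {1,…,p}, and let B ∈ ℝ^{p×L} satisfy B[i,:] = 0 for all i ∉ S. If the minimum eigenvalue of X[:,S]ᵀX[:,S] is at least c for some c > 0, then ‖(Iₙ − P(S'))X B‖_F² ≥ c·‖B[S\S', :]‖_F², where B[S\S', :] denotes the submatrix of B consisting of the rows indexed by S\S'. -/
open Matrix

/-- The squared Frobenius norm of a real matrix. -/
noncomputable def frobSq {n L : ℕ} (A : Matrix (Fin n) (Fin L) ℝ) : ℝ :=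
  ∑ i, ∑ j, A i j ^ 2

/-- The span of the columns of `X` indexed by the index set `S`. -/
def colSpan {n p : ℕ} (X : Matrix (Fin n) (Fin p) ℝ) (S : Finset (Fin p)) :
    Submodule ℝ (Fin n → ℝ) :=
  Submodule.span ℝ ((fun j => fun i => X i j) '' (S : Set (Fin p)))

/-- `P` is the orthogonal projection matrix onto the subspace `V` of `ℝⁿ`. -/
def IsOrthProjOnto {n : ℕ} (P : Matrix (Fin n) (Fin n) ℝ)
    (V : Submodule ℝ (Fin n → ℝ)) : Prop :=
  P * P = P ∧ Pᵀ = P ∧ LinearMap.range P.mulVecLin = V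

lemma col_bound {n p : ℕ} (X : Matrix (Fin n) (Fin p) ℝ)
    (S' S : Finset (Fin p)) (hsub : S' ⊆ S)
    (c : ℝ) (hc : 0 ≤ c)
    (hmineig : ∀ b : Fin p → ℝ, (∀ i ∉ S, b i = 0) →
      c * ∑ i, b i ^ 2 ≤ ∑ i, (X.mulVec b i) ^ 2)
    (P' : Matrix (Fin n) (Fin n) ℝ)
    (hrange : LinearMap.range P'.mulVecLin = colSpan X S')
    (b : Fin p → ℝ) (hb : ∀ i ∉ S, b i = 0) :
    c * ∑ i ∈ S \ S', b i ^ 2 ≤ ∑ i, (((1 - P').mulVec (X.mulVec b)) i) ^ 2 := by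
  have hmem : P'.mulVec (X.mulVec b) ∈ colSpan X S' := by
    rw [← hrange]; exact ⟨X.mulVec b, rfl⟩
  have hK : colSpan X S' ≤
      (Submodule.pi ((↑S' : Set (Fin p))ᶜ) (fun _ => (⊥ : Submodule ℝ ℝ))).map
        X.mulVecLin := by
    rw [colSpan, Submodule.span_le]
    rintro v ⟨j, hj, rfl⟩
    refine ⟨Pi.single j 1, ?_, ?_⟩
    · intro i hi
      have : i ≠ j := fun h => hi (h ▸ hj)
      simp [Pi.single_apply, this]
    · ext i
      simp [Matrix.mulVecLin_apply, Matrix.mulVec, dotProduct, Pi.single_apply,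
        Finset.sum_ite_eq', mul_comm]
  obtain ⟨a, ha, haeq⟩ := hK hmem
  have ha' : ∀ i ∉ S', a i = 0 := by
    intro i hi
    have := ha i (by simpa using hi)
    simpa using this
  have key : (1 - P').mulVec (X.mulVec b) = X.mulVec (b - a) := by
    have haeq' : X.mulVec a = P'.mulVec (X.mulVec b) := haeq
    rw [Matrix.sub_mulVec, Matrix.one_mulVec, Matrix.mulVec_sub, haeq']
  rw [key]
  have hsupp : ∀ i ∉ S, (b - a) i = 0 := by
    intro i hi
    have : a i = 0 := ha' i (fun h => hi (hsub h))
    simp [hb i hi, this]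
  calc c * ∑ i ∈ S \ S', b i ^ 2
      = c * ∑ i ∈ S \ S', (b - a) i ^ 2 := by
        congr 1
        refine Finset.sum_congr rfl fun i hi => ?_
        have : a i = 0 := ha' i (Finset.mem_sdiff.mp hi).2
        simp [this]
    _ ≤ c * ∑ i, (b - a) i ^ 2 := by
        apply mul_le_mul_of_nonneg_left _ hc
        exact Finset.sum_le_sum_of_subset_of_nonneg (Finset.subset_univ _)
          (fun i _ _ => sq_nonneg _)
    _ ≤ ∑ i, (X.mulVec (b - a) i) ^ 2 := hmineig _ hsupp

/-- if `B` is row-supported on `S`, `S' ⊆ S`, and the minimum eigenvalue of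
`X[:,S]ᵀ X[:,S]` is at least `c > 0` (expressed through its quadratic form on vectors
supported on `S`), then `‖(Iₙ − P(S')) X B‖_F² ≥ c ‖B[S\S', :]‖_F²`. -/
theorem residual_energy_lower_bound
    {n p L : ℕ} (X : Matrix (Fin n) (Fin p) ℝ)
    (S' S : Finset (Fin p)) (hsub : S' ⊆ S)
    (B : Matrix (Fin p) (Fin L) ℝ) (hBsupp : ∀ i ∉ S, ∀ j, B i j = 0)
    (c : ℝ) (hc : 0 < c)
    (hmineig : ∀ b : Fin p → ℝ, (∀ i ∉ S, b i = 0) →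
      c * ∑ i, b i ^ 2 ≤ ∑ i, (X.mulVec b i) ^ 2)
    (P' : Matrix (Fin n) (Fin n) ℝ) (hP' : IsOrthProjOnto P' (colSpan X S')) :
    c * ∑ i ∈ S \ S', ∑ j, B i j ^ 2 ≤ frobSq ((1 - P') * (X * B)) := by
  obtain ⟨-, -, hrange⟩ := hP'
  have hentry : ∀ (j : Fin L) (i : Fin n),
      (((1 - P') * (X * B) : Matrix (Fin n) (Fin L) ℝ)) i j
        = ((1 - P').mulVec (X.mulVec (fun k => B k j))) i := by
    intro j i
    simp [Matrix.mul_apply, Matrix.mulVec, dotProduct, Finset.mul_sum]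
  have hswap : frobSq ((1 - P') * (X * B))
      = ∑ j, ∑ i, (((1 - P') * (X * B) : Matrix (Fin n) (Fin L) ℝ)) i j ^ 2 := by
    rw [frobSq]; exact Finset.sum_comm
  rw [hswap, Finset.sum_comm (s := S \ S'), Finset.mul_sum]
  refine Finset.sum_le_sum fun j _ => ?_
  have := col_bound X S' S hsub c hc.le hmineig P' hrange (fun k => B k j)
    (fun i hi => hBsupp i hi j)
  calc c * ∑ i ∈ S \ S', B i j ^ 2
      ≤ ∑ i, (((1 - P').mulVec (X.mulVec (fun k => B k j))) i) ^ 2 := this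
    _ = ∑ i, (((1 - P') * (X * B) : Matrix (Fin n) (Fin L) ℝ)) i j ^ 2 := by
        refine Finset.sum_congr rfl fun i _ => ?_
        rw [hentry j i]
end

section
/- Let X ∈ ℝ^{n×p}, let S ⊆ {1,…,p} with card(S) = k, and let 0 ≤ δ < 1 be such that (1−δ)‖b‖₂² ≤ ‖Xb‖₂² for every vector b ∈ ℝ^p with at most k nonzero entries. Let B ∈ ℝ^{p×L} satisfy B[i,:] = 0 for all i ∉ S, and let S' ⊊ S be a proper subset. Then ‖(Iₙ − P(S'))X B‖_F ≥ √(1−δ) · min_{i∈S} ‖B[i,:]‖₂. -/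
open Matrix

/-- The Frobenius norm of a real matrix. -/
noncomputable def frob {n L : ℕ} (A : Matrix (Fin n) (Fin L) ℝ) : ℝ :=
  Real.sqrt (frobSq A)

/-- The minimum Euclidean row norm `min_{i ∈ S} ‖B[i,:]‖₂` of the rows of `B` indexed
by `S`. -/
noncomputable def minRowNorm {p L : ℕ} (B : Matrix (Fin p) (Fin L) ℝ)
    (S : Finset (Fin p)) : ℝ :=
  sInf ((fun i => Real.sqrt (∑ j, B i j ^ 2)) '' (S : Set (Fin p)))

/-- if `(1−δ)‖b‖₂² ≤ ‖Xb‖₂²` for all `k`-sparse `b`, `B` is row-supported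
on `S` with `card S = k`, and `S' ⊊ S`, then
`‖(Iₙ − P(S')) X B‖_F ≥ √(1−δ) · min_{i∈S} ‖B[i,:]‖₂`. -/
theorem residual_norm_RIC_lower_bound
    {n p L k : ℕ} (X : Matrix (Fin n) (Fin p) ℝ)
    (S : Finset (Fin p)) (hS : S.card = k)
    (δ : ℝ) (hδ0 : 0 ≤ δ) (hδ1 : δ < 1)
    (hRIC : ∀ b : Fin p → ℝ,
      (∃ T : Finset (Fin p), T.card ≤ k ∧ ∀ i ∉ T, b i = 0) →
      (1 - δ) * ∑ i, b i ^ 2 ≤ ∑ i, (X.mulVec b i) ^ 2)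
    (B : Matrix (Fin p) (Fin L) ℝ) (hBsupp : ∀ i ∉ S, ∀ j, B i j = 0)
    (S' : Finset (Fin p)) (hsub : S' ⊂ S)
    (P' : Matrix (Fin n) (Fin n) ℝ) (hP' : IsOrthProjOnto P' (colSpan X S')) :
    Real.sqrt (1 - δ) * minRowNorm B S ≤ frob ((1 - P') * (X * B)) := by
  classical
  obtain ⟨i₀, hi₀S, hi₀S'⟩ := Finset.exists_of_ssubset hsub
  obtain ⟨hPidem, hPsym, hPrange⟩ := hP'
  -- submodule of vectors of the form X c with c supported on S'
  set W : Submodule ℝ (Fin n → ℝ) :=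
    { carrier := {v | ∃ c : Fin p → ℝ, (∀ i ∉ S', c i = 0) ∧ X.mulVec c = v}
      add_mem' := by
        rintro a b ⟨c, hc, rfl⟩ ⟨d, hd, rfl⟩
        exact ⟨c + d, fun i hi => by simp [hc i hi, hd i hi],
          by rw [mulVec_add]⟩
      zero_mem' := ⟨0, fun i _ => rfl, mulVec_zero X⟩
      smul_mem' := by
        rintro a v ⟨c, hc, rfl⟩
        exact ⟨a • c, fun i hi => by simp [hc i hi], by rw [mulVec_smul]⟩ }
    with hWdef
  have hspan : colSpan X S' ≤ W := by
    rw [colSpan, Submodule.span_le]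
    rintro v ⟨j, hj, rfl⟩
    refine ⟨Pi.single j 1, fun i hi => Pi.single_eq_of_ne (by rintro rfl; exact hi hj) 1, ?_⟩
    ext i
    simp [mulVec_single]
  -- key per-column inequality
  set M : Matrix (Fin n) (Fin L) ℝ := (1 - P') * (X * B) with hMdef
  have hcol : ∀ j : Fin L, (1 - δ) * B i₀ j ^ 2 ≤ ∑ i, M i j ^ 2 := by
    intro j
    set bj : Fin p → ℝ := fun i => B i j with hbj
    have hmem : P'.mulVec (X.mulVec bj) ∈ W := by
      apply hspan
      rw [← hPrange]
      exact ⟨X.mulVec bj, rfl⟩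
    obtain ⟨c, hc0, hcX⟩ := hmem
    have hci₀ : c i₀ = 0 := hc0 i₀ hi₀S'
    have hMcol : ∀ i, M i j = X.mulVec (bj - c) i := by
      intro i
      have hXB : ∀ m, (X * B) m j = X.mulVec bj m := by
        intro m
        simp [Matrix.mul_apply, mulVec, dotProduct, hbj]
      have h1 : M i j
          = (X * B) i j - (P'.mulVec (fun m => (X * B) m j)) i := by
        rw [hMdef]
        simp [Matrix.mul_apply, Matrix.sub_apply, Matrix.one_apply, sub_mul,
          Finset.sum_sub_distrib, mulVec, dotProduct, Finset.sum_ite_eq]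
      rw [h1]
      have h2 : (fun m => (X * B) m j) = X.mulVec bj := funext hXB
      rw [hXB, h2, ← hcX, mulVec_sub]
      simp
    have hsupp : ∃ T : Finset (Fin p), T.card ≤ k ∧ ∀ i ∉ T, (bj - c) i = 0 := by
      refine ⟨S, le_of_eq hS, fun i hi => ?_⟩
      have : i ∉ S' := fun h => hi (hsub.1 h)
      simp [hbj, hBsupp i hi j, hc0 i this]
    have hRICj := hRIC (bj - c) hsupp
    have hsingle : B i₀ j ^ 2 ≤ ∑ i, (bj - c) i ^ 2 := by
      have : (bj - c) i₀ ^ 2 = B i₀ j ^ 2 := by simp [hbj, hci₀]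
      rw [← this]
      exact Finset.single_le_sum (f := fun i => (bj - c) i ^ 2) (fun i _ => sq_nonneg _) (Finset.mem_univ i₀)
    calc (1 - δ) * B i₀ j ^ 2 ≤ (1 - δ) * ∑ i, (bj - c) i ^ 2 := by
          apply mul_le_mul_of_nonneg_left hsingle; linarith
      _ ≤ ∑ i, (X.mulVec (bj - c) i) ^ 2 := hRICj
      _ = ∑ i, M i j ^ 2 := by
          apply Finset.sum_congr rfl; intro i _; rw [hMcol i]
  have hsum : (1 - δ) * ∑ j, B i₀ j ^ 2 ≤ frobSq M := by
    rw [frobSq, Finset.sum_comm, Finset.mul_sum]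
    exact Finset.sum_le_sum fun j _ => hcol j
  have h1 : Real.sqrt ((1 - δ) * ∑ j, B i₀ j ^ 2) ≤ frob M :=
    Real.sqrt_le_sqrt hsum
  rw [Real.sqrt_mul (by linarith)] at h1
  have h2 : minRowNorm B S ≤ Real.sqrt (∑ j, B i₀ j ^ 2) :=
    csInf_le ((S.finite_toSet.image _).bddBelow) ⟨i₀, hi₀S, rfl⟩
  calc Real.sqrt (1 - δ) * minRowNorm B S
      ≤ Real.sqrt (1 - δ) * Real.sqrt (∑ j, B i₀ j ^ 2) :=
        mul_le_mul_of_nonneg_left h2 (Real.sqrt_nonneg _)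
    _ ≤ frob M := h1
end

section
/- Let X ∈ ℝ^{n×p} and let Y = XB + W, where B ∈ ℝ^{p×L} satisfies B[i,:] = 0 for all i ∉ S for an index set S ⊆ {1,…,p}, and W ∈ ℝ^{n×L}. Suppose the minimum eigenvalue of X[:,S]ᵀX[:,S] is at least c > 0, let B_min = min_{i∈S} ‖B[i,:]‖₂, let S' ⊊ S be a proper subset, and assume ‖W‖_F < √c · B_min. Then ‖(Iₙ − P(S))Y‖_F ≤ ‖W‖_F, ‖(Iₙ − P(S'))Y‖_F ≥ √c·B_min − ‖W‖_F > 0, and consequently ‖(Iₙ − P(S))Y‖_F / ‖(Iₙ − P(S'))Y‖_F ≤ ‖W‖_F / (√c·B_min − ‖W‖_F). -/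
open Matrix

section Aux

open Matrix Finset

lemma frob_nonneg {n L : ℕ} (A : Matrix (Fin n) (Fin L) ℝ) : 0 ≤ frob A :=
  Real.sqrt_nonneg _

lemma frobSq_swap {n L : ℕ} (A : Matrix (Fin n) (Fin L) ℝ) :
    frobSq A = ∑ j, ∑ i, A i j ^ 2 := Finset.sum_comm

lemma frob_mono {n L : ℕ} {A C : Matrix (Fin n) (Fin L) ℝ}
    (h : frobSq A ≤ frobSq C) : frob A ≤ frob C :=
  Real.sqrt_le_sqrt h

lemma frob_eq_norm {n L : ℕ} (A : Matrix (Fin n) (Fin L) ℝ) :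
    frob A = ‖(WithLp.equiv 2 (Fin n × Fin L → ℝ)).symm (fun q => A q.1 q.2)‖ := by
  rw [EuclideanSpace.norm_eq]
  simp [frob, frobSq, Fintype.sum_prod_type, Real.norm_eq_abs, sq_abs]

lemma frob_add_le {n L : ℕ} (A C : Matrix (Fin n) (Fin L) ℝ) :
    frob (A + C) ≤ frob A + frob C := by
  rw [frob_eq_norm, frob_eq_norm, frob_eq_norm]
  have h : (WithLp.equiv 2 (Fin n × Fin L → ℝ)).symm (fun q => (A + C) q.1 q.2)
      = (WithLp.equiv 2 (Fin n × Fin L → ℝ)).symm (fun q => A q.1 q.2)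
        + (WithLp.equiv 2 (Fin n × Fin L → ℝ)).symm (fun q => C q.1 q.2) := by
    ext q
    simp [Matrix.add_apply]
  rw [h]
  exact norm_add_le _ _

lemma frob_sub_le {n L : ℕ} (A C : Matrix (Fin n) (Fin L) ℝ) :
    frob (A - C) ≤ frob A + frob C := by
  have hneg : frob (-C) = frob C := by
    unfold frob frobSq
    simp
  calc frob (A - C) = frob (A + (-C)) := by rw [sub_eq_add_neg]
    _ ≤ frob A + frob (-C) := frob_add_le _ _
    _ = frob A + frob C := by rw [hneg]

lemma orthproj_dist_le {n : ℕ} {P : Matrix (Fin n) (Fin n) ℝ} {V : Submodule ℝ (Fin n → ℝ)}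
    (hP : IsOrthProjOnto P V) (w v : Fin n → ℝ) (hv : v ∈ V) :
    ∑ i, (w i - P.mulVec w i) ^ 2 ≤ ∑ i, (w i - v i) ^ 2 := by
  obtain ⟨hidem, hsym, hrange⟩ := hP
  have hPw : P.mulVec w ∈ V := by
    rw [← hrange]
    exact ⟨w, by rw [Matrix.mulVecLin_apply]⟩
  have hd : P.mulVec w - v ∈ V := V.sub_mem hPw hv
  rw [← hrange] at hd
  obtain ⟨u, hu⟩ := hd
  rw [Matrix.mulVecLin_apply] at hu
  have hPr : P.mulVec (w - P.mulVec w) = 0 := by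
    rw [Matrix.mulVec_sub, Matrix.mulVec_mulVec, hidem, sub_self]
  have horth : ∑ i, (w i - P.mulVec w i) * (P.mulVec w i - v i) = 0 := by
    have h1 : ∑ i, (w i - P.mulVec w i) * (P.mulVec w i - v i)
        = (w - P.mulVec w) ⬝ᵥ (P.mulVec u) := by
      rw [hu]
      simp [dotProduct, Pi.sub_apply]
    rw [h1, Matrix.dotProduct_mulVec]
    have h2 : Matrix.vecMul (w - P.mulVec w) P = 0 := by
      have h3 : Matrix.vecMul (w - P.mulVec w) P = Pᵀ.mulVec (w - P.mulVec w) := by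
        rw [Matrix.mulVec_transpose]
      rw [h3, hsym, hPr]
    rw [h2]
    simp
  have hexp : ∀ i, (w i - v i) ^ 2
      = (w i - P.mulVec w i) ^ 2 + 2 * ((w i - P.mulVec w i) * (P.mulVec w i - v i))
        + (P.mulVec w i - v i) ^ 2 := by
    intro i; ring
  have hsum : ∑ i, (w i - v i) ^ 2
      = (∑ i, (w i - P.mulVec w i) ^ 2)
        + 2 * (∑ i, (w i - P.mulVec w i) * (P.mulVec w i - v i))
        + ∑ i, (P.mulVec w i - v i) ^ 2 := by
    simp_rw [hexp]
    rw [Finset.sum_add_distrib, Finset.sum_add_distrib, Finset.mul_sum]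
  have hnn : 0 ≤ ∑ i, (P.mulVec w i - v i) ^ 2 :=
    Finset.sum_nonneg fun i _ => sq_nonneg _
  rw [hsum, horth]
  linarith

lemma mulVec_mem_colSpan {n p : ℕ} (X : Matrix (Fin n) (Fin p) ℝ)
    (S : Finset (Fin p)) (a : Fin p → ℝ) (ha : ∀ i ∉ S, a i = 0) :
    X.mulVec a ∈ colSpan X S := by
  have h : X.mulVec a = ∑ j ∈ S, a j • (fun i => X i j) := by
    ext i
    rw [Finset.sum_apply]
    simp only [Pi.smul_apply, smul_eq_mul]
    rw [Matrix.mulVec, dotProduct]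
    rw [← Finset.sum_subset (Finset.subset_univ S) (fun j _ hj => by rw [ha j hj, mul_zero])]
    exact Finset.sum_congr rfl fun j _ => mul_comm _ _
  rw [h]
  exact Submodule.sum_mem _ fun j hj =>
    Submodule.smul_mem _ _ (Submodule.subset_span ⟨j, hj, rfl⟩)

lemma exists_of_mem_colSpan {n p : ℕ} {X : Matrix (Fin n) (Fin p) ℝ}
    {S : Finset (Fin p)} {y : Fin n → ℝ} (h : y ∈ colSpan X S) :
    ∃ a : Fin p → ℝ, (∀ i ∉ S, a i = 0) ∧ y = X.mulVec a := by
  induction h using Submodule.span_induction with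
  | mem x hx =>
    obtain ⟨j, hj, rfl⟩ := hx
    refine ⟨Pi.single j 1, fun i hi => Pi.single_eq_of_ne (by rintro rfl; exact hi hj) 1, ?_⟩
    ext i
    rw [Matrix.mulVec, dotProduct]
    simp [Pi.single_apply]
  | zero => exact ⟨0, fun i _ => rfl, by rw [Matrix.mulVec_zero]⟩
  | add x y' hx hy' ihx ihy =>
    obtain ⟨a, haS, rfl⟩ := ihx
    obtain ⟨b, hbS, rfl⟩ := ihy
    exact ⟨a + b, fun i hi => by simp [haS i hi, hbS i hi], by rw [Matrix.mulVec_add]⟩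
  | smul r x hx ihx =>
    obtain ⟨a, haS, rfl⟩ := ihx
    exact ⟨r • a, fun i hi => by simp [haS i hi], by rw [Matrix.mulVec_smul]⟩

lemma residual_entry {n L : ℕ} (P : Matrix (Fin n) (Fin n) ℝ)
    (Y : Matrix (Fin n) (Fin L) ℝ) (i : Fin n) (j : Fin L) :
    ((1 - P) * Y : Matrix (Fin n) (Fin L) ℝ) i j = Y i j - P.mulVec (fun k => Y k j) i := by
  rw [Matrix.sub_mul, Matrix.one_mul, Matrix.sub_apply]
  rfl

end Aux

/-- deterministic residual-ratio bound at the true support: if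
`Y = XB + W` with `B` row-supported on `S`, the minimum eigenvalue of `X[:,S]ᵀX[:,S]` is
at least `c > 0`, `S' ⊊ S`, and `‖W‖_F < √c · B_min`, then `‖(Iₙ−P(S))Y‖_F ≤ ‖W‖_F`,
`‖(Iₙ−P(S'))Y‖_F ≥ √c·B_min − ‖W‖_F > 0`, and the residual ratio is at most
`‖W‖_F / (√c·B_min − ‖W‖_F)`. -/
theorem residual_ratio_at_true_support
    {n p L : ℕ} (X : Matrix (Fin n) (Fin p) ℝ)
    (S : Finset (Fin p)) (B : Matrix (Fin p) (Fin L) ℝ)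
    (hBsupp : ∀ i ∉ S, ∀ j, B i j = 0)
    (W Y : Matrix (Fin n) (Fin L) ℝ) (hY : Y = X * B + W)
    (c : ℝ) (hc : 0 < c)
    (hmineig : ∀ b : Fin p → ℝ, (∀ i ∉ S, b i = 0) →
      c * ∑ i, b i ^ 2 ≤ ∑ i, (X.mulVec b i) ^ 2)
    (S' : Finset (Fin p)) (hsub : S' ⊂ S)
    (hW : frob W < Real.sqrt c * minRowNorm B S)
    (PS PS' : Matrix (Fin n) (Fin n) ℝ)
    (hPS : IsOrthProjOnto PS (colSpan X S)) (hPS' : IsOrthProjOnto PS' (colSpan X S')) :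
    frob ((1 - PS) * Y) ≤ frob W ∧
      Real.sqrt c * minRowNorm B S - frob W ≤ frob ((1 - PS') * Y) ∧
      0 < Real.sqrt c * minRowNorm B S - frob W ∧
      frob ((1 - PS) * Y) / frob ((1 - PS') * Y)
        ≤ frob W / (Real.sqrt c * minRowNorm B S - frob W) := by
  obtain ⟨i0, hi0S, hi0S'⟩ := Finset.exists_of_ssubset hsub
  have hW0 : 0 ≤ frob W := frob_nonneg W
  -- Part 1
  have part1 : frob ((1 - PS) * Y) ≤ frob W := by
    apply frob_mono
    rw [frobSq_swap ((1 - PS) * Y), frobSq_swap W]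
    apply Finset.sum_le_sum
    intro j _
    have hmem : X.mulVec (fun i => B i j) ∈ colSpan X S :=
      mulVec_mem_colSpan X S _ (fun i hi => hBsupp i hi j)
    have hkey := orthproj_dist_le hPS (fun k => Y k j) _ hmem
    calc ∑ i, ((1 - PS) * Y : Matrix (Fin n) (Fin L) ℝ) i j ^ 2
        = ∑ i, (Y i j - PS.mulVec (fun k => Y k j) i) ^ 2 :=
          Finset.sum_congr rfl fun i _ => by rw [residual_entry]
      _ ≤ ∑ i, (Y i j - X.mulVec (fun i => B i j) i) ^ 2 := hkey
      _ = ∑ i, W i j ^ 2 := by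
          apply Finset.sum_congr rfl
          intro i _
          have hXB : (X * B : Matrix (Fin n) (Fin L) ℝ) i j
              = X.mulVec (fun k => B k j) i := by
            rw [Matrix.mul_apply, Matrix.mulVec, dotProduct]
          rw [hY, Matrix.add_apply, hXB]
          ring
  -- residual of W under PS' is contracted
  have hCW : frob ((1 - PS') * W) ≤ frob W := by
    apply frob_mono
    rw [frobSq_swap ((1 - PS') * W), frobSq_swap W]
    apply Finset.sum_le_sum
    intro j _
    have hkey := orthproj_dist_le hPS' (fun k => W k j) 0 (Submodule.zero_mem _)
    calc ∑ i, ((1 - PS') * W : Matrix (Fin n) (Fin L) ℝ) i j ^ 2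
        = ∑ i, (W i j - PS'.mulVec (fun k => W k j) i) ^ 2 :=
          Finset.sum_congr rfl fun i _ => by rw [residual_entry]
      _ ≤ ∑ i, (W i j - (0 : Fin n → ℝ) i) ^ 2 := hkey
      _ = ∑ i, W i j ^ 2 := by simp
  -- lower bound on frobSq of (1 - PS') * (X * B)
  have hD : c * ∑ j, B i0 j ^ 2 ≤ frobSq ((1 - PS') * (X * B)) := by
    rw [frobSq_swap, Finset.mul_sum]
    apply Finset.sum_le_sum
    intro j _
    have hbS : ∀ i ∉ S, B i j = 0 := fun i hi => hBsupp i hi j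
    have hwmem : PS'.mulVec (X.mulVec (fun k => B k j)) ∈ colSpan X S' := by
      obtain ⟨_, _, hrange⟩ := hPS'
      rw [← hrange]
      exact ⟨X.mulVec (fun k => B k j), by rw [Matrix.mulVecLin_apply]⟩
    obtain ⟨a, haS', ha⟩ := exists_of_mem_colSpan hwmem
    have hres : ∀ i, ((1 - PS') * (X * B) : Matrix (Fin n) (Fin L) ℝ) i j
        = X.mulVec ((fun k => B k j) - a) i := by
      intro i
      rw [residual_entry]
      have hcol : (fun k => (X * B : Matrix (Fin n) (Fin L) ℝ) k j)
          = X.mulVec (fun l => B l j) := by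
        funext k
        rw [Matrix.mul_apply, Matrix.mulVec, dotProduct]
      rw [Matrix.mulVec_sub]
      have h1 : (X * B : Matrix (Fin n) (Fin L) ℝ) i j = X.mulVec (fun l => B l j) i :=
        congrFun hcol i
      rw [h1, hcol, ha, Pi.sub_apply]
    have hsupp : ∀ i ∉ S, ((fun k => B k j) - a) i = 0 := by
      intro i hi
      have hi' : i ∉ S' := fun h => hi (hsub.1 h)
      simp [hbS i hi, haS' i hi']
    calc c * B i0 j ^ 2
        ≤ c * ∑ i, ((fun k => B k j) - a) i ^ 2 := by
          apply mul_le_mul_of_nonneg_left _ hc.le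
          have h0 : ((fun k => B k j) - a) i0 ^ 2 = B i0 j ^ 2 := by
            simp [haS' i0 hi0S']
          rw [← h0]
          exact Finset.single_le_sum (f := fun i => ((fun k => B k j) - a) i ^ 2)
            (fun i _ => sq_nonneg _) (Finset.mem_univ i0)
      _ ≤ ∑ i, X.mulVec ((fun k => B k j) - a) i ^ 2 := hmineig _ hsupp
      _ = ∑ i, ((1 - PS') * (X * B) : Matrix (Fin n) (Fin L) ℝ) i j ^ 2 :=
          Finset.sum_congr rfl fun i _ => by rw [hres]
  -- minRowNorm bound
  have hmrn : minRowNorm B S ≤ Real.sqrt (∑ j, B i0 j ^ 2) := by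
    apply csInf_le
    · refine ⟨0, fun x hx => ?_⟩
      obtain ⟨i, _, rfl⟩ := hx
      exact Real.sqrt_nonneg _
    · exact ⟨i0, hi0S, rfl⟩
  have hDfrob : Real.sqrt c * minRowNorm B S ≤ frob ((1 - PS') * (X * B)) := by
    calc Real.sqrt c * minRowNorm B S
        ≤ Real.sqrt c * Real.sqrt (∑ j, B i0 j ^ 2) :=
          mul_le_mul_of_nonneg_left hmrn (Real.sqrt_nonneg c)
      _ = Real.sqrt (c * ∑ j, B i0 j ^ 2) := (Real.sqrt_mul hc.le _).symm
      _ ≤ frob ((1 - PS') * (X * B)) := Real.sqrt_le_sqrt hD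
  -- triangle inequality
  have hdec : (1 - PS') * (X * B) = (1 - PS') * Y - (1 - PS') * W := by
    rw [hY, Matrix.mul_add]
    abel
  have htri : frob ((1 - PS') * (X * B)) ≤ frob ((1 - PS') * Y) + frob W := by
    rw [hdec]
    calc frob ((1 - PS') * Y - (1 - PS') * W)
        ≤ frob ((1 - PS') * Y) + frob ((1 - PS') * W) := frob_sub_le _ _
      _ ≤ frob ((1 - PS') * Y) + frob W := by linarith
  have part2 : Real.sqrt c * minRowNorm B S - frob W ≤ frob ((1 - PS') * Y) := by
    linarith
  have part3 : 0 < Real.sqrt c * minRowNorm B S - frob W := by linarith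
  exact ⟨part1, part2, part3, div_le_div₀ hW0 part1 part3 part2⟩
end

section
/- Let S ⊆ {1,…,p} with card(S) = k_r ≥ 1, and let (S^k)_{k=1}^{N} be a sequence of subsets of {1,…,p} such that each S^k contains at most one element not in ⋃_{j<k} S^j (at most one new index appears at each step). Assume ⋃_{k=1}^{N} S^k ⊇ S. Define the aggregated support sequence as follows: list the distinct indices occurring in S^1,…,S^N in the order of their first appearance (well-defined since at most one new index appears per step), and let S_agg^m be the set of the first m indices in this list. Then S_agg^{k_r} = S if and only if min{k : S^k ∩ ({1,…,p}\S) ≠ ∅} > min{k : ⋃_{j=1}^{k} S^j ⊇ S}, where the minimum of the empty set is taken to be +∞. -/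
/-- Lemma 3: let `T ⊆ {1,…,p}` with `card T = k_r ≥ 1` and let
`(S k)_{k=1}^N` be a support sequence in which at most one new index appears at
each step (relative to the union `U (k-1)` of the previous sets), with
`U k = S 1 ∪ ⋯ ∪ S k`, and suppose `T ⊆ U N`. The aggregated support `Sagg m` (the set
of the first `m` distinct indices in order of first appearance) equals `U k` for the
first `k` at which the cumulative union has at least `m` elements. Then `Sagg k_r = T`
iff the first time an index outside `T` appears is strictly later than the first time
the cumulative union covers `T` (minima taken in `ℕ∞`, so `min ∅ = ⊤`). -/
theorem aggregated_support_recovers_iff {p : ℕ} (N k_r : ℕ) (hkr : 1 ≤ k_r)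
    (S : ℕ → Finset (Fin p)) (T : Finset (Fin p)) (hT : T.card = k_r)
    (U : ℕ → Finset (Fin p))
    (hU : ∀ k, U k = (Finset.range k).biUnion (fun j => S (j + 1)))
    (honenew : ∀ k, 1 ≤ k → k ≤ N → (S k \ U (k - 1)).card ≤ 1)
    (hcover : T ⊆ U N)
    (Sagg : ℕ → Finset (Fin p))
    (hSagg : ∀ m, Sagg m = U (sInf {k : ℕ | m ≤ (U k).card})) :
    Sagg k_r = T ↔
      sInf {e : ℕ∞ | ∃ k : ℕ, e = k ∧ 1 ≤ k ∧ k ≤ N ∧ (S k \ T).Nonempty} >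
        sInf {e : ℕ∞ | ∃ k : ℕ, e = k ∧ 1 ≤ k ∧ k ≤ N ∧ T ⊆ U k} := by
  classical
  have hUmono : ∀ {a b : ℕ}, a ≤ b → U a ⊆ U b := by
    intro a b hab
    rw [hU, hU]
    exact Finset.biUnion_subset_biUnion_of_subset_left _
      (Finset.range_subset_range.2 hab)
  have hSsub : ∀ k, 1 ≤ k → S k ⊆ U k := by
    intro k hk
    rw [hU]
    intro x hx
    refine Finset.mem_biUnion.2 ⟨k - 1, Finset.mem_range.2 (by omega), ?_⟩
    rwa [Nat.sub_add_cancel hk]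
  have hTne : T.Nonempty := Finset.card_pos.1 (by omega)
  have hU0 : U 0 = ∅ := by rw [hU]; simp
  set kc := sInf {k : ℕ | T ⊆ U k} with hkc_def
  have hkc_mem : T ⊆ U kc := by
    have : kc ∈ {k : ℕ | T ⊆ U k} := Nat.sInf_mem ⟨N, hcover⟩
    exact this
  have hkcN : kc ≤ N := Nat.sInf_le hcover
  have hkc1 : 1 ≤ kc := by
    by_contra h
    have hz : kc = 0 := by omega
    rw [hz, hU0] at hkc_mem
    exact hTne.ne_empty (Finset.subset_empty.1 hkc_mem)
  have hRHS : sInf {e : ℕ∞ | ∃ k : ℕ, e = k ∧ 1 ≤ k ∧ k ≤ N ∧ T ⊆ U k}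
      = (kc : ℕ∞) := by
    apply le_antisymm
    · exact sInf_le ⟨kc, rfl, hkc1, hkcN, hkc_mem⟩
    · apply le_sInf
      rintro e ⟨k, rfl, -, -, hk⟩
      exact_mod_cast Nat.sInf_le hk
  rw [gt_iff_lt, hRHS, hSagg]
  have hLHS : ((kc : ℕ∞) <
      sInf {e : ℕ∞ | ∃ k : ℕ, e = k ∧ 1 ≤ k ∧ k ≤ N ∧ (S k \ T).Nonempty})
      ↔ ∀ k : ℕ, 1 ≤ k → k ≤ N → (S k \ T).Nonempty → kc < k := by
    constructor
    · intro h k h1 h2 h3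
      have hle := sInf_le (show (k : ℕ∞) ∈
        {e : ℕ∞ | ∃ k : ℕ, e = k ∧ 1 ≤ k ∧ k ≤ N ∧ (S k \ T).Nonempty} from
        ⟨k, rfl, h1, h2, h3⟩)
      exact_mod_cast lt_of_lt_of_le h hle
    · intro h
      have hstep : ((kc + 1 : ℕ) : ℕ∞) ≤
          sInf {e : ℕ∞ | ∃ k : ℕ, e = k ∧ 1 ≤ k ∧ k ≤ N ∧ (S k \ T).Nonempty} := by
        apply le_sInf
        rintro e ⟨k, rfl, h1, h2, h3⟩
        exact_mod_cast h k h1 h2 h3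
      exact lt_of_lt_of_le (by exact_mod_cast Nat.lt_succ_self kc) hstep
  rw [hLHS]
  set ks := sInf {k : ℕ | k_r ≤ (U k).card} with hks_def
  have hksN : k_r ≤ (U N).card := hT ▸ Finset.card_le_card hcover
  have hks_mem : k_r ≤ (U ks).card := by
    have : ks ∈ {k : ℕ | k_r ≤ (U k).card} := Nat.sInf_mem ⟨N, hksN⟩
    exact this
  constructor
  · intro hagg k h1 h2 h3
    by_contra hlt
    push_neg at hlt
    have hks_le : ks ≤ kc := Nat.sInf_le (hT ▸ Finset.card_le_card hkc_mem)
    have hkc_le : kc ≤ ks :=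
      Nat.sInf_le (show T ⊆ U ks from hagg.symm ▸ Finset.Subset.refl T)
    have hUkc : U kc = T := by rw [show kc = ks by omega, hagg]
    obtain ⟨x, hx⟩ := h3
    have hx1 := Finset.mem_sdiff.1 hx
    have hxU : x ∈ U kc := hUmono hlt (hSsub k h1 hx1.1)
    rw [hUkc] at hxU
    exact hx1.2 hxU
  · intro h
    have hUkcT : U kc = T := by
      apply Finset.Subset.antisymm _ hkc_mem
      intro x hx
      rw [hU] at hx
      obtain ⟨j, hj, hxj⟩ := Finset.mem_biUnion.1 hx
      have hj' := Finset.mem_range.1 hj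
      by_contra hxT
      have hne : (S (j + 1) \ T).Nonempty := ⟨x, Finset.mem_sdiff.2 ⟨hxj, hxT⟩⟩
      have := h (j + 1) (by omega) (by omega) hne
      omega
    have hks_le : ks ≤ kc := Nat.sInf_le (by
      show k_r ≤ (U kc).card
      rw [hUkcT, hT])
    have hkc_le : kc ≤ ks := by
      by_contra hlt
      push_neg at hlt
      have hnot : ¬ T ⊆ U ks := Nat.notMem_of_lt_sInf hlt
      have hsub : U ks ⊆ T := hUkcT ▸ hUmono (le_of_lt hlt)
      have hcard : (U ks).card < k_r := by
        rw [← hT]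
        exact Finset.card_lt_card (Finset.ssubset_iff_subset_ne.2
          ⟨hsub, fun he => hnot (he ▸ Finset.Subset.refl _)⟩)
      omega
    rw [show ks = kc by omega, hUkcT]
end

section
/- Let X ∈ ℝ^{n×p}, Y ∈ ℝⁿ, and λ > 0. The zero vector is a global minimizer over ℝ^p of the LASSO objective D ↦ ‖Y − XD‖₂² + λ‖D‖₁ if and only if λ ≥ 2‖XᵀY‖_∞. -/
/-!
Expanding the square, `0` minimizes the objective iff `2 ⟪XᵀY, D⟫ ≤ ‖XD‖₂² + λ‖D‖₁` for every `D`.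
The ℓ∞–ℓ¹ Hölder inequality `⟪c, D⟫ ≤ ‖c‖_∞ ‖D‖₁` gives sufficiency. For necessity, test
`D = ±t eⱼ`: the quadratic term is `O(t²)` while the others are linear in `t`, so dividing by `t`
and letting `t → 0⁺` leaves `±2 (XᵀY)ⱼ ≤ λ`.
-/

open Matrix Filter Topology

section

variable {m ι : Type*} [Fintype m] [Fintype ι]

theorem Matrix.sum_sq_sub_mulVec (X : Matrix m ι ℝ) (Y : m → ℝ) (D : ι → ℝ) :
    ∑ i, (Y i - (X *ᵥ D) i) ^ 2 = ∑ i, Y i ^ 2 - 2 * ((Xᵀ *ᵥ Y) ⬝ᵥ D) + ∑ i, (X *ᵥ D) i ^ 2 := by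
  have hcross : Y ⬝ᵥ X *ᵥ D = (Xᵀ *ᵥ Y) ⬝ᵥ D := by rw [dotProduct_mulVec, mulVec_transpose]
  rw [← hcross, dotProduct, Finset.mul_sum, ← Finset.sum_sub_distrib, ← Finset.sum_add_distrib]
  exact Finset.sum_congr rfl fun i _ => by ring

theorem dotProduct_le_norm_mul_sum_abs (c D : ι → ℝ) : c ⬝ᵥ D ≤ ‖c‖ * ∑ j, |D j| := by
  rw [dotProduct, Finset.mul_sum]
  refine Finset.sum_le_sum fun j _ => ?_
  calc c j * D j ≤ |c j| * |D j| := by rw [← abs_mul]; exact le_abs_self _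
    _ ≤ ‖c‖ * |D j| := by gcongr; exact norm_le_pi_norm c j

theorem Matrix.sum_sq_mulVec_single [DecidableEq ι] (X : Matrix m ι ℝ) (j : ι) (t : ℝ) :
    ∑ i, (X *ᵥ Pi.single j t) i ^ 2 = (∑ i, X i j ^ 2) * t ^ 2 := by
  simp only [mulVec_single, Pi.smul_apply, MulOpposite.smul_eq_mul_unop, MulOpposite.unop_op,
    col_apply, mul_pow, Finset.sum_mul]

theorem sum_abs_single [DecidableEq ι] (j : ι) (t : ℝ) : ∑ k, |Pi.single j t k| = |t| := by
  simp [Pi.apply_single (fun _ => abs) (fun _ => abs_zero)]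

end

theorem le_of_forall_pos_mul_le_sq_add {a K lam : ℝ}
    (h : ∀ t > 0, a * t ≤ K * t ^ 2 + lam * t) : a ≤ lam := by
  have hlim : Tendsto (fun t => K * t + lam) (𝓝[>] 0) (𝓝 lam) := by
    have : Continuous fun t : ℝ => K * t + lam := by fun_prop
    simpa using (this.tendsto 0).mono_left nhdsWithin_le_nhds
  refine ge_of_tendsto hlim (eventually_nhdsWithin_of_forall fun t (ht : 0 < t) => ?_)
  refine le_of_mul_le_mul_right ?_ ht
  linarith [h t ht]

theorem two_mul_abs_le_of_forall_mul_le {a K lam : ℝ}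
    (h : ∀ t, 2 * a * t ≤ K * t ^ 2 + lam * |t|) : 2 * |a| ≤ lam := by
  rw [← abs_two, ← abs_mul, abs_le']
  constructor <;> refine le_of_forall_pos_mul_le_sq_add (K := K) fun t ht => ?_
  · simpa [abs_of_pos ht] using h t
  · simpa [abs_of_pos ht] using h (-t)

/-- property B1 of the LASSO regularization path, exact constant: the zero
vector is a global minimizer of the LASSO objective `D ↦ ‖Y − XD‖₂² + λ‖D‖₁` over `ℝ^p`
if and only if `λ ≥ 2‖XᵀY‖_∞`.  Here `‖XᵀY‖_∞` is the supremum norm of the vector `XᵀY`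
(the `norm` of the pi type `Fin p → ℝ`). -/
theorem lasso_zero_minimizer_iff {n p : ℕ}
    (X : Matrix (Fin n) (Fin p) ℝ) (Y : Fin n → ℝ) (lam : ℝ) (hlam : 0 < lam) :
    (∀ D : Fin p → ℝ,
        ∑ i, Y i ^ 2 ≤ ∑ i, (Y i - X.mulVec D i) ^ 2 + lam * ∑ j, |D j|) ↔
      2 * ‖Xᵀ.mulVec Y‖ ≤ lam := by
  simp only [Matrix.sum_sq_sub_mulVec]
  constructor
  · intro h
    have hcoord : ∀ j, 2 * |(Xᵀ *ᵥ Y) j| ≤ lam := fun j =>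
      two_mul_abs_le_of_forall_mul_le (K := ∑ i, X i j ^ 2) fun t => by
        have hj := h (Pi.single j t)
        rw [dotProduct_single, Matrix.sum_sq_mulVec_single, sum_abs_single] at hj
        linarith
    rw [← le_div_iff₀' two_pos, pi_norm_le_iff_of_nonneg (by positivity)]
    exact fun j => (le_div_iff₀' two_pos).2 (hcoord j)
  · intro hc D
    have hholder := dotProduct_le_norm_mul_sum_abs (Xᵀ *ᵥ Y) D
    have hsq : 0 ≤ ∑ i, (X *ᵥ D) i ^ 2 := by positivity
    have hl1 : 0 ≤ ∑ j, |D j| := by positivity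
    nlinarith
end
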